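/- Let α > 2, λ > 1 and s ∈ (−2,0). Let A be the set of pairs (ρ,ζ) of real sequences indexed by k ≥ 1 such that ρ_k ∈ [9/10, 11/10] and ζ_k ∈ [λ^{α−2}/25, 6λ^{α−2}] for all k ≥ 1, and define f by f_k(ρ,ζ) = (1 + ρ_{k+1} R₁(ζ_{k+1}))/(ρ_k R₃(ζ_k)) for k ≥ 1. Then f maps A into X⁰ with sup_{(ρ,ζ)∈A} ‖f(ρ,ζ)‖₀ < ∞, and f : A → X^s is continuous with respect to the metric on A induced by ‖ρ − ρ′‖_s + ‖ζ − ζ′‖_s. -/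
import Mathlib


open Set

noncomputable section

/-- The rational function `R₁(z) = (z²-1)/(z²+1)`. -/
def R1 (z : ℝ) : ℝ := (z ^ 2 - 1) / (z ^ 2 + 1)

/-- The rational function `R₃(z) = 2z/(z²+1)`. -/
def R3 (z : ℝ) : ℝ := 2 * z / (z ^ 2 + 1)

/-- The map `f` from Section 4. -/
def fMap (ρ ζ : ℕ → ℝ) (k : ℕ) : ℝ :=
  (1 + ρ (k + 1) * R1 (ζ (k + 1))) / (ρ k * R3 (ζ k))

/-- Membership in the set `A`. -/
def memA (lam alpha : ℝ) (ρ ζ : ℕ → ℝ) : Prop :=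
  ∀ k : ℕ, 1 ≤ k → ρ k ∈ Icc (9 / 10 : ℝ) (11 / 10) ∧
    ζ k ∈ Icc (lam ^ (alpha - 2) / 25) (6 * lam ^ (alpha - 2))

lemma abs_R1_le_one (z : ℝ) : |R1 z| ≤ 1 := by
  have h : (0:ℝ) < z^2 + 1 := by positivity
  rw [R1, abs_div, abs_of_pos h, div_le_one h, abs_le]
  constructor <;> nlinarith [sq_nonneg z]

lemma abs_R3_le_one (z : ℝ) : |R3 z| ≤ 1 := by
  have h : (0:ℝ) < z^2 + 1 := by positivity
  rw [R3, abs_div, abs_of_pos h, div_le_one h, abs_le]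
  constructor <;> nlinarith [sq_nonneg (z-1), sq_nonneg (z+1)]

lemma R1_lip {a b : ℝ} (ha : 0 ≤ a) (hb : 0 ≤ b) : |R1 a - R1 b| ≤ 2 * |a - b| := by
  have ha1 : (0:ℝ) < a^2+1 := by positivity
  have hb1 : (0:ℝ) < b^2+1 := by positivity
  have hprod : (0:ℝ) < (a^2+1)*(b^2+1) := by positivity
  have heq : R1 a - R1 b = (2*(a-b)*(a+b))/((a^2+1)*(b^2+1)) := by
    unfold R1; field_simp; ring
  rw [heq, abs_div, abs_of_pos hprod, div_le_iff₀ hprod]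
  have h1 : |2*(a-b)*(a+b)| = 2 * |a - b| * (a+b) := by
    rw [abs_mul, abs_mul, abs_of_nonneg (by linarith : (0:ℝ) ≤ a+b)]
    norm_num
  rw [h1]
  have h2 : a + b ≤ (a^2+1)*(b^2+1) := by
    nlinarith [sq_nonneg (a-1/2), sq_nonneg (b-1/2), sq_nonneg (a*b)]
  nlinarith [abs_nonneg (a-b)]

lemma R3_lip {a b : ℝ} (ha : 0 ≤ a) (hb : 0 ≤ b) : |R3 a - R3 b| ≤ 2 * |a - b| := by
  have ha1 : (0:ℝ) < a^2+1 := by positivity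
  have hb1 : (0:ℝ) < b^2+1 := by positivity
  have hprod : (0:ℝ) < (a^2+1)*(b^2+1) := by positivity
  have heq : R3 a - R3 b = (2*(a-b)*(1-a*b))/((a^2+1)*(b^2+1)) := by
    unfold R3; field_simp; ring
  rw [heq, abs_div, abs_of_pos hprod, div_le_iff₀ hprod]
  have h1 : |2*(a-b)*(1-a*b)| = 2 * |a - b| * |1 - a*b| := by
    rw [abs_mul, abs_mul]; norm_num
  rw [h1]
  have h2 : |1-a*b| ≤ (a^2+1)*(b^2+1) := by
    rw [abs_le]
    constructor <;> nlinarith [sq_nonneg (a*b-1), sq_nonneg (a-b), mul_nonneg ha hb]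
  nlinarith [abs_nonneg (a-b), abs_nonneg (1-a*b)]

lemma R3_lower {c C z : ℝ} (hc : 0 < c) (hz : z ∈ Icc c C) :
    2*c/(C^2+1) ≤ R3 z := by
  obtain ⟨h1, h2⟩ := hz
  rw [R3]
  apply div_le_div₀ (by linarith) (by linarith) (by positivity) (by nlinarith)

lemma quot_lip {d N N' D D' : ℝ} (hd : 0 < d) (hD : d ≤ D) (hD' : d ≤ D')
    (hD'ub : D' ≤ 11/10) (hN'ub : |N'| ≤ 21/10) :
    |N/D - N'/D'| ≤ (|N - N'| * (11/10) + (21/10) * |D - D'|) / d^2 := by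
  have hD0 : 0 < D := lt_of_lt_of_le hd hD
  have hD'0 : 0 < D' := lt_of_lt_of_le hd hD'
  have heq : N/D - N'/D' = ((N - N')*D' + N'*(D' - D))/(D*D') := by
    field_simp; ring
  rw [heq, abs_div, abs_of_pos (mul_pos hD0 hD'0)]
  have hnum : |(N - N')*D' + N'*(D' - D)| ≤ |N - N'| * (11/10) + (21/10) * |D - D'| := by
    calc |(N - N')*D' + N'*(D' - D)| ≤ |(N - N')*D'| + |N'*(D' - D)| := abs_add_le _ _
      _ = |N - N'| * |D'| + |N'| * |D' - D| := by rw [abs_mul, abs_mul]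
      _ ≤ |N - N'| * (11/10) + (21/10) * |D - D'| := by
          rw [abs_of_pos hD'0, abs_sub_comm D' D]
          gcongr <;> first | exact abs_nonneg _ | assumption
  apply div_le_div₀ _ hnum (by positivity) (by nlinarith)
  positivity

lemma N_diff {p1 q1 p1' q1' : ℝ}
    (hp1' : p1' ∈ Icc (9/10:ℝ) (11/10)) (hq10 : 0 ≤ q1) (hq10' : 0 ≤ q1') :
    |(1 + p1 * R1 q1) - (1 + p1' * R1 q1')| ≤ |p1 - p1'| + (11/5) * |q1 - q1'| := by
  have heq : (1 + p1 * R1 q1) - (1 + p1' * R1 q1')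
      = (p1 - p1')*R1 q1 + p1'*(R1 q1 - R1 q1') := by ring
  rw [heq]
  calc |(p1 - p1')*R1 q1 + p1'*(R1 q1 - R1 q1')|
      ≤ |(p1 - p1')*R1 q1| + |p1'*(R1 q1 - R1 q1')| := abs_add_le _ _
    _ = |p1 - p1'| * |R1 q1| + |p1'| * |R1 q1 - R1 q1'| := by rw [abs_mul, abs_mul]
    _ ≤ |p1 - p1'| * 1 + (11/10) * (2 * |q1 - q1'|) := by
        gcongr
        · exact abs_R1_le_one q1
        · rw [abs_le]; exact ⟨by linarith [hp1'.1], hp1'.2⟩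
        · exact R1_lip hq10 hq10'
    _ = |p1 - p1'| + (11/5) * |q1 - q1'| := by ring

lemma D_diff {p q p' q' : ℝ}
    (hp' : p' ∈ Icc (9/10:ℝ) (11/10)) (hq0 : 0 ≤ q) (hq0' : 0 ≤ q') :
    |p * R3 q - p' * R3 q'| ≤ |p - p'| + (11/5) * |q - q'| := by
  have heq : p * R3 q - p' * R3 q' = (p - p')*R3 q + p'*(R3 q - R3 q') := by ring
  rw [heq]
  calc |(p - p')*R3 q + p'*(R3 q - R3 q')|
      ≤ |(p - p')*R3 q| + |p'*(R3 q - R3 q')| := abs_add_le _ _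
    _ = |p - p'| * |R3 q| + |p'| * |R3 q - R3 q'| := by rw [abs_mul, abs_mul]
    _ ≤ |p - p'| * 1 + (11/10) * (2 * |q - q'|) := by
        gcongr
        · exact abs_R3_le_one q
        · rw [abs_le]; exact ⟨by linarith [hp'.1], hp'.2⟩
        · exact R3_lip hq0 hq0'
    _ = |p - p'| + (11/5) * |q - q'| := by ring

lemma N_ub {p1 q1 : ℝ} (hp1 : p1 ∈ Icc (9/10:ℝ) (11/10)) :
    |1 + p1 * R1 q1| ≤ 21/10 := by
  calc |1 + p1 * R1 q1| ≤ |(1:ℝ)| + |p1 * R1 q1| := abs_add_le _ _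
    _ = 1 + |p1| * |R1 q1| := by rw [abs_mul, abs_one]
    _ ≤ 1 + (11/10) * 1 := by
        gcongr
        · rw [abs_le]; exact ⟨by linarith [hp1.1], hp1.2⟩
        · exact abs_R1_le_one q1
    _ = 21/10 := by norm_num

lemma D_lb {r p q : ℝ} (hr : 0 < r) (hp : p ∈ Icc (9/10:ℝ) (11/10))
    (hrq : r ≤ R3 q) : 9/10 * r ≤ p * R3 q := by
  have h1 := hp.1
  nlinarith

lemma D_ub {p q : ℝ} (hp : p ∈ Icc (9/10:ℝ) (11/10)) (hq0 : 0 ≤ R3 q) :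
    p * R3 q ≤ 11/10 := by
  have h1 := hp.1
  have h2 := hp.2
  have h3 := abs_le.mp (abs_R3_le_one q)
  nlinarith

lemma key_bound {r p q p1 q1 : ℝ} (hr : 0 < r)
    (hp1 : p1 ∈ Icc (9/10:ℝ) (11/10)) (hp : p ∈ Icc (9/10:ℝ) (11/10))
    (hrq : r ≤ R3 q) :
    |(1 + p1 * R1 q1)/(p * R3 q)| ≤ (21/10) / (9/10 * r) := by
  have hd : (0:ℝ) < 9/10 * r := by positivity
  have hD := D_lb hr hp hrq
  rw [abs_div, abs_of_pos (lt_of_lt_of_le hd hD)]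
  exact div_le_div₀ (by norm_num) (N_ub hp1) hd hD

lemma key_lip {r : ℝ} (hr : 0 < r)
    {p q p1 q1 p' q' p1' q1' : ℝ}
    (hp : p ∈ Icc (9/10:ℝ) (11/10)) (hp1 : p1 ∈ Icc (9/10:ℝ) (11/10))
    (hp' : p' ∈ Icc (9/10:ℝ) (11/10)) (hp1' : p1' ∈ Icc (9/10:ℝ) (11/10))
    (hq0 : 0 ≤ q) (hq0' : 0 ≤ q') (hq10 : 0 ≤ q1) (hq10' : 0 ≤ q1')
    (hrq : r ≤ R3 q) (hrq' : r ≤ R3 q') :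
    |(1 + p1 * R1 q1)/(p * R3 q) - (1 + p1' * R1 q1')/(p' * R3 q')|
      ≤ 5/((9/10*r)^2) * (|p - p'| + |q - q'| + |p1 - p1'| + |q1 - q1'|) := by
  have hd : (0:ℝ) < 9/10 * r := by positivity
  have hq'0R : (0:ℝ) ≤ R3 q' := le_trans hr.le hrq'
  have h1 := quot_lip (N := 1 + p1 * R1 q1) (N' := 1 + p1' * R1 q1') hd
    (D_lb hr hp hrq) (D_lb hr hp' hrq') (D_ub hp' hq'0R) (N_ub hp1')
  refine le_trans h1 ?_
  have heq : 5/((9/10*r)^2) * (|p - p'| + |q - q'| + |p1 - p1'| + |q1 - q1'|)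
      = (5 * (|p - p'| + |q - q'| + |p1 - p1'| + |q1 - q1'|))/((9/10*r)^2) := by
    ring
  rw [heq]
  apply div_le_div₀ ?_ ?_ (by positivity) le_rfl
  · positivity
  · have h2 := N_diff (p1 := p1) (q1 := q1) hp1' hq10 hq10'
    have h3 := D_diff (p := p) (q := q) hp' hq0 hq0'
    have := abs_nonneg (p - p')
    have := abs_nonneg (q - q')
    have := abs_nonneg (p1 - p1')
    have := abs_nonneg (q1 - q1')
    nlinarith

/-- Lemma A.2(i): `f` is bounded `A → X⁰` and continuous `A → Xˢ`. -/
theorem fMap_bounded_and_continuous (alpha lam s : ℝ) (hα : 2 < alpha)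
    (hlam : 1 < lam) (hs : s ∈ Ioo (-2 : ℝ) 0) :
    (∃ M : ℝ, ∀ ρ ζ : ℕ → ℝ, memA lam alpha ρ ζ →
      ∀ k : ℕ, 1 ≤ k → |fMap ρ ζ k| ≤ M) ∧
    (∀ ε : ℝ, 0 < ε → ∀ ρ ζ : ℕ → ℝ, memA lam alpha ρ ζ →
      ∃ η : ℝ, 0 < η ∧ ∀ ρ' ζ' : ℕ → ℝ, memA lam alpha ρ' ζ' →
        (∀ k : ℕ, 1 ≤ k → lam ^ (s * (k : ℝ)) * |ρ k - ρ' k| ≤ η ∧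
          lam ^ (s * (k : ℝ)) * |ζ k - ζ' k| ≤ η) →
        ∀ k : ℕ, 1 ≤ k →
          lam ^ (s * (k : ℝ)) * |fMap ρ ζ k - fMap ρ' ζ' k| ≤ ε) := by
  have hlam0 : (0:ℝ) < lam := by linarith
  have hL : (0:ℝ) < lam ^ (alpha - 2) := Real.rpow_pos_of_pos hlam0 _
  set c : ℝ := lam ^ (alpha - 2) / 25 with hc_def
  set C : ℝ := 6 * lam ^ (alpha - 2) with hC_def
  have hc : 0 < c := by positivity
  set r : ℝ := 2 * c / (C ^ 2 + 1) with hr_def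
  have hr : 0 < r := by positivity
  constructor
  · refine ⟨21/10 / (9/10 * r), fun ρ ζ hA k hk => ?_⟩
    obtain ⟨hρk, hζk⟩ := hA k hk
    obtain ⟨hρk1, hζk1⟩ := hA (k+1) (by omega)
    exact key_bound hr hρk1 hρk (R3_lower hc hζk)
  · intro ε hε ρ ζ hA
    set μ : ℝ := lam ^ (-s) with hμ_def
    have hμ : 0 < μ := Real.rpow_pos_of_pos hlam0 _
    set Lc : ℝ := 5 / ((9/10 * r) ^ 2) with hLc_def
    have hLc : 0 < Lc := by positivity
    refine ⟨ε / (Lc * (2 + 2 * μ)), by positivity, fun ρ' ζ' hA' hclose k hk => ?_⟩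
    set η : ℝ := ε / (Lc * (2 + 2 * μ)) with hη_def
    obtain ⟨hρk, hζk⟩ := hA k hk
    obtain ⟨hρk1, hζk1⟩ := hA (k+1) (by omega)
    obtain ⟨hρk', hζk'⟩ := hA' k hk
    obtain ⟨hρk1', hζk1'⟩ := hA' (k+1) (by omega)
    have hζ0 : (0:ℝ) ≤ ζ k := le_trans hc.le hζk.1
    have hζ0' : (0:ℝ) ≤ ζ' k := le_trans hc.le hζk'.1
    have hζ10 : (0:ℝ) ≤ ζ (k+1) := le_trans hc.le hζk1.1
    have hζ10' : (0:ℝ) ≤ ζ' (k+1) := le_trans hc.le hζk1'.1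
    have hkey := key_lip hr hρk hρk1 hρk' hρk1' hζ0 hζ0' hζ10 hζ10'
      (R3_lower hc hζk) (R3_lower hc hζk')
    set w : ℝ := lam ^ (s * (k:ℝ)) with hw_def
    set w1 : ℝ := lam ^ (s * ((k:ℝ) + 1)) with hw1_def
    have hw : 0 < w := Real.rpow_pos_of_pos hlam0 _
    have hw1 : 0 < w1 := Real.rpow_pos_of_pos hlam0 _
    have hwmul : w = μ * w1 := by
      rw [hw_def, hw1_def, hμ_def, ← Real.rpow_add hlam0]
      congr 1
      ring
    have hck : lam ^ (s * (((k+1 : ℕ)):ℝ)) = w1 := by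
      rw [hw1_def]
      congr 1
      push_cast
      ring
    obtain ⟨h1, h2⟩ := hclose k hk
    obtain ⟨h3, h4⟩ := hclose (k+1) (by omega)
    rw [hck] at h3 h4
    have hΔ : |fMap ρ ζ k - fMap ρ' ζ' k|
        ≤ Lc * (|ρ k - ρ' k| + |ζ k - ζ' k| + |ρ (k+1) - ρ' (k+1)| + |ζ (k+1) - ζ' (k+1)|) :=
      hkey
    calc w * |fMap ρ ζ k - fMap ρ' ζ' k|
        ≤ w * (Lc * (|ρ k - ρ' k| + |ζ k - ζ' k| + |ρ (k+1) - ρ' (k+1)| + |ζ (k+1) - ζ' (k+1)|)) := by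
          exact mul_le_mul_of_nonneg_left hΔ hw.le
      _ = Lc * ((w * |ρ k - ρ' k|) + (w * |ζ k - ζ' k|)
            + μ * (w1 * |ρ (k+1) - ρ' (k+1)|) + μ * (w1 * |ζ (k+1) - ζ' (k+1)|)) := by
          rw [hwmul]; ring
      _ ≤ Lc * (η + η + μ * η + μ * η) := by
          have h3' := mul_le_mul_of_nonneg_left h3 hμ.le
          have h4' := mul_le_mul_of_nonneg_left h4 hμ.le
          apply mul_le_mul_of_nonneg_left _ hLc.le
          linarith
      _ = Lc * (2 + 2 * μ) * η := by ring
      _ = ε := by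
          rw [hη_def]
          field_simp
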